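/- arXiv:2112.06860 — 2 statements merged into one kernel-verified Lean document; each statement's English description precedes it below -/
import Mathlib

section
/- Let t, u, s₁, s₂ ∈ ℂ with Re(s₁ + u) > 0 and Re(s₂ + t + u) > 0. Then the double integral ∫_{ℝˣ}∫_{ℝˣ} |g₁|^{s₂−s₁+t} · |g₂|^{s₁+u} · exp(−π g₁² − π g₂²/g₁²) d×g₂ d×g₁ converges absolutely and equals ζ_ℝ(s₂ + t + u) · ζ_ℝ(s₁ + u). (This is the case n = 1, F = ℝ of the paper's theorem on the modified GL_n × GL_n Rankin–Selberg integral of Sakellaridis: for π = |·|^t and σ = |·|^u the integral ∫∫ W_π(g₁)W_σ(g₂)Φ*(g₁⁻¹g₂)Φ(g₁)|g₂/g₁|^{s₁}|g₁|^{s₂} d×g₂ d×g₁ with Gaussian test data equals L(s₂, π × σ)·L(s₁, σ); this result is new in the paper even in the unramified case.) -/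
/-!
The substitution `g₂ = g₁ y` preserves `d×g₁ d×g₂` and turns the integrand into
`|g₁|^{s₂+t+u} e^{-π g₁²} · |y|^{s₁+u} e^{-π y²}`, so the double integral factors into two
Tate integrals `∫ |x|^s e^{-π x²} d×x`. By evenness such an integral is twice the Mellin
transform of `e^{-π t²}` at `s`, which the substitution `t² ↦ t` turns into
`π^{-s/2} Γ(s/2) = ζ_ℝ(s)`.
-/

open MeasureTheory

/-- The real zeta factor `ζ_ℝ(s) = π^{-s/2} Γ(s/2)`. -/
noncomputable def zetaR (s : ℂ) : ℂ :=
  (Real.pi : ℂ) ^ (-s / 2) * Complex.Gamma (s / 2)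

/-- The complex zeta factor `ζ_ℂ(s) = 2 (2π)^{-s} Γ(s)`. -/
noncomputable def zetaC (s : ℂ) : ℂ :=
  2 * (2 * (Real.pi : ℂ)) ^ (-s) * Complex.Gamma s

/-- The multiplicative Haar measure `d×x = dx/|x|` on `ℝˣ = ℝ ∖ {0}`. -/
noncomputable def mulHaarR : Measure ℝ :=
  volume.withDensity fun x => ENNReal.ofReal (1 / |x|)

/-- The multiplicative Haar measure `d×z = (2/π) dA(z)/|z|²` on `ℂˣ`. -/
noncomputable def mulHaarC : Measure ℂ :=
  volume.withDensity fun z => ENNReal.ofReal (2 / (Real.pi * ‖z‖ ^ 2))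

/-- The complex power `|x|^w = exp(w log |x|)` for `x ∈ ℝ`. -/
noncomputable def cpowR (x : ℝ) (w : ℂ) : ℂ :=
  Complex.exp (w * (Real.log |x| : ℂ))

/-- The complex power `|z|_ℂ^w = exp(w log |z|²)` for `z ∈ ℂ`. -/
noncomputable def cpowC (z : ℂ) (w : ℂ) : ℂ :=
  Complex.exp (w * (Real.log (‖z‖ ^ 2) : ℂ))

/-- The integrand of the `n = 1`, `F = ℝ` modified Rankin–Selberg integral of
Sakellaridis, in the variables `p = (g₁, g₂)`:
`|g₁|^{s₂-s₁+t} |g₂|^{s₁+u} exp(-π g₁² - π g₂²/g₁²)`. -/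
noncomputable def sakIntegrandR1 (s₁ s₂ t u : ℂ) (p : ℝ × ℝ) : ℂ :=
  cpowR p.1 (s₂ - s₁ + t) * cpowR p.2 (s₁ + u) *
    (Real.exp (-Real.pi * p.1 ^ 2 - Real.pi * (p.2 ^ 2 / p.1 ^ 2)) : ℂ)

open Set Real

lemma cpowR_eq_cpow {x : ℝ} (hx : 0 < x) (s : ℂ) : cpowR x s = (x : ℂ) ^ s := by
  rw [cpowR, Complex.cpow_def_of_ne_zero (Complex.ofReal_ne_zero.mpr hx.ne'),
    ← Complex.ofReal_log hx.le, abs_of_pos hx, mul_comm]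

lemma cpowR_abs (x : ℝ) (s : ℂ) : cpowR |x| s = cpowR x s := by
  rw [cpowR, abs_abs, cpowR]

lemma cpowR_add (x : ℝ) (a b : ℂ) : cpowR x (a + b) = cpowR x a * cpowR x b := by
  rw [cpowR, cpowR, cpowR, add_mul, Complex.exp_add]

lemma cpowR_mul {x y : ℝ} (hx : x ≠ 0) (hy : y ≠ 0) (s : ℂ) :
    cpowR (x * y) s = cpowR x s * cpowR y s := by
  rw [cpowR, cpowR, cpowR, abs_mul, Real.log_mul (abs_ne_zero.mpr hx) (abs_ne_zero.mpr hy),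
    Complex.ofReal_add, mul_add, Complex.exp_add]

lemma hasMellin_exp_neg_pi_mul_sq {s : ℂ} (hs : 0 < s.re) :
    HasMellin (fun t : ℝ => (rexp (-π * t ^ 2) : ℂ)) s (zetaR s / 2) := by
  have hs2 : 0 < (s / 2).re := by rw [Complex.div_ofNat_re]; positivity
  have hexp : HasMellin (fun t : ℝ => (rexp (-t) : ℂ)) (s / 2) (Complex.Gamma (s / 2)) :=
    ⟨(Complex.GammaIntegral_convergent hs2).congr_fun (fun _ _ => mul_comm _ _) measurableSet_Ioi,
      by rw [Complex.Gamma_eq_integral hs2, Complex.GammaIntegral_eq_mellin]⟩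
  have hsq : (fun t : ℝ => (rexp (-π * t ^ 2) : ℂ)) =
      fun t => (fun r : ℝ => (rexp (-(π * r)) : ℂ)) (t ^ (2 : ℝ)) := by
    ext t; rw [rpow_two, neg_mul]
  rw [hsq, HasMellin, MellinConvergent.comp_rpow (f := fun r : ℝ => (rexp (-(π * r)) : ℂ))
    two_ne_zero, mellin_comp_rpow (fun r : ℝ => (rexp (-(π * r)) : ℂ)),
    MellinConvergent.comp_mul_left (f := fun r : ℝ => (rexp (-r) : ℂ)) pi_pos,
    mellin_comp_mul_left (fun r : ℝ => (rexp (-r) : ℂ)) _ pi_pos, Complex.ofReal_ofNat, hexp.2]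
  refine ⟨hexp.1, ?_⟩
  rw [zetaR, smul_eq_mul, Complex.real_smul, neg_div, abs_two]
  push_cast
  ring

section EvenFunctions

variable {E : Type*} [NormedAddCommGroup E]

lemma comp_abs_ae_eq_indicator_add_comp_neg (f : ℝ → E) :
    (fun x => f |x|) =ᵐ[volume]
      fun x => (Ioi 0).indicator f x + (Ioi 0).indicator f (-x) := by
  filter_upwards [compl_mem_ae_iff.mpr (measure_singleton (0 : ℝ))] with x hx
  rcases lt_or_gt_of_ne (show x ≠ 0 from hx) with hneg | hpos
  · simp [hneg, hneg.not_gt, abs_of_neg hneg]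
  · simp [hpos, hpos.not_gt, abs_of_pos hpos]

lemma integrable_comp_abs_of_integrableOn {f : ℝ → E} (hf : IntegrableOn f (Ioi 0)) :
    Integrable fun x => f |x| := by
  have hg := (integrable_indicator_iff measurableSet_Ioi).mpr hf
  exact (hg.add hg.comp_neg).congr (comp_abs_ae_eq_indicator_add_comp_neg f).symm

lemma integral_comp_abs_of_integrableOn [NormedSpace ℝ E] {f : ℝ → E}
    (hf : IntegrableOn f (Ioi 0)) : ∫ x, f |x| = (2 : ℝ) • ∫ x in Ioi 0, f x := by
  have hg := (integrable_indicator_iff measurableSet_Ioi).mpr hf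
  rw [integral_congr_ae (comp_abs_ae_eq_indicator_add_comp_neg f), integral_add hg hg.comp_neg,
    integral_neg_eq_self (fun x => (Ioi 0).indicator f x), integral_indicator measurableSet_Ioi,
    two_smul]

end EvenFunctions

section MulHaar

instance : SFinite mulHaarR := by unfold mulHaarR; infer_instance

lemma ae_ne_zero_mulHaarR : ∀ᵐ x ∂mulHaarR, x ≠ 0 :=
  (withDensity_absolutelyContinuous _ _).ae_le (compl_mem_ae_iff.mpr (measure_singleton 0))

variable {E : Type*} [NormedAddCommGroup E] [NormedSpace ℝ E]

lemma integrable_mulHaarR_iff {f : ℝ → E} :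
    Integrable f mulHaarR ↔ Integrable fun x => |x|⁻¹ • f x := by
  rw [mulHaarR, integrable_withDensity_iff_integrable_smul' (by fun_prop)
    (ae_of_all _ fun _ => ENNReal.ofReal_lt_top)]
  simp only [one_div, inv_nonneg, abs_nonneg, ENNReal.toReal_ofReal]

lemma integral_mulHaarR (f : ℝ → E) : ∫ x, f x ∂mulHaarR = ∫ x, |x|⁻¹ • f x := by
  rw [mulHaarR, integral_withDensity_eq_integral_toReal_smul (by fun_prop)
    (ae_of_all _ fun _ => ENNReal.ofReal_lt_top)]
  simp only [one_div, inv_nonneg, abs_nonneg, ENNReal.toReal_ofReal]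

end MulHaar

section MulHaarMellin

variable {E : Type*} [NormedAddCommGroup E] [NormedSpace ℂ E]

lemma mellin_integrand_zero_eq_inv_smul (f : ℝ → E) :
    (fun t : ℝ => (t : ℂ) ^ ((0 : ℂ) - 1) • f t) = fun t => t⁻¹ • f t := by
  ext t
  rw [zero_sub, Complex.cpow_neg_one, ← Complex.ofReal_inv, Complex.coe_smul]

lemma HasMellin.congr_Ioi {f g : ℝ → E} {s : ℂ} {m : E} (hf : HasMellin f s m)
    (h : EqOn f g (Ioi 0)) : HasMellin g s m := by
  have h' : EqOn (fun t : ℝ => (t : ℂ) ^ (s - 1) • f t) (fun t => (t : ℂ) ^ (s - 1) • g t)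
      (Ioi 0) := fun t ht => by simp only [h ht]
  exact ⟨hf.1.congr_fun h' measurableSet_Ioi,
    (setIntegral_congr_fun measurableSet_Ioi h').symm.trans hf.2⟩

lemma integrable_comp_abs_mulHaarR {f : ℝ → E} (hf : MellinConvergent f 0) :
    Integrable (fun x => f |x|) mulHaarR := by
  rw [MellinConvergent, mellin_integrand_zero_eq_inv_smul] at hf
  exact integrable_mulHaarR_iff.mpr (integrable_comp_abs_of_integrableOn hf)

lemma integral_comp_abs_mulHaarR {f : ℝ → E} (hf : MellinConvergent f 0) :
    ∫ x, f |x| ∂mulHaarR = (2 : ℝ) • mellin f 0 := by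
  rw [MellinConvergent, mellin_integrand_zero_eq_inv_smul] at hf
  rw [integral_mulHaarR, mellin, mellin_integrand_zero_eq_inv_smul]
  exact integral_comp_abs_of_integrableOn (f := fun t => t⁻¹ • f t) hf

end MulHaarMellin

noncomputable def tateIntegrandR (s : ℂ) (x : ℝ) : ℂ :=
  cpowR x s * (rexp (-π * x ^ 2) : ℂ)

lemma tateIntegrandR_abs (s : ℂ) (x : ℝ) : tateIntegrandR s |x| = tateIntegrandR s x := by
  rw [tateIntegrandR, tateIntegrandR, cpowR_abs, sq_abs]

lemma hasMellin_tateIntegrandR {s : ℂ} (hs : 0 < s.re) :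
    HasMellin (tateIntegrandR s) 0 (zetaR s / 2) := by
  obtain ⟨hconv, hval⟩ := hasMellin_exp_neg_pi_mul_sq hs
  rw [← zero_add s] at hconv hval
  refine HasMellin.congr_Ioi (f := fun t => (t : ℂ) ^ s • (rexp (-π * t ^ 2) : ℂ))
    ⟨MellinConvergent.cpow_smul.mpr hconv, by rw [mellin_cpow_smul, hval, zero_add]⟩
    fun t ht => ?_
  rw [tateIntegrandR, cpowR_eq_cpow ht, ← smul_eq_mul]

lemma integrable_tateIntegrandR {s : ℂ} (hs : 0 < s.re) :
    Integrable (tateIntegrandR s) mulHaarR := by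
  simpa only [tateIntegrandR_abs] using
    integrable_comp_abs_mulHaarR (hasMellin_tateIntegrandR hs).1

lemma integral_tateIntegrandR {s : ℂ} (hs : 0 < s.re) :
    ∫ x, tateIntegrandR s x ∂mulHaarR = zetaR s := by
  have h := integral_comp_abs_mulHaarR (hasMellin_tateIntegrandR hs).1
  rw [(hasMellin_tateIntegrandR hs).2] at h
  simp only [tateIntegrandR_abs] at h
  rw [h, Complex.real_smul]
  push_cast
  ring

lemma measurePreserving_mul_left_mulHaarR {a : ℝ} (ha : a ≠ 0) :
    MeasurePreserving (a * ·) mulHaarR mulHaarR := by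
  refine ⟨measurable_const_mul a, Measure.ext fun s hs => ?_⟩
  -- also at `x = 0`, where both sides vanish since `1 / 0 = 0`
  have hdensity : ∀ x : ℝ,
      ENNReal.ofReal |a| * ENNReal.ofReal (1 / |a * x|) = ENNReal.ofReal (1 / |x|) := fun x => by
    rw [← ENNReal.ofReal_mul (abs_nonneg a), abs_mul, one_div, one_div, mul_inv, ← mul_assoc,
      mul_inv_cancel₀ (abs_ne_zero.mpr ha), one_mul]
  have himage : (a * ·) '' ((a * ·) ⁻¹' s) = s :=
    image_preimage_eq s (mul_left_surjective₀ ha)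
  rw [Measure.map_apply (measurable_const_mul a) hs, mulHaarR,
    withDensity_apply _ (measurable_const_mul a hs), withDensity_apply _ hs]
  conv_rhs => rw [← himage]
  rw [lintegral_image_eq_lintegral_abs_deriv_mul (measurable_const_mul a hs)
    (fun x _ => (hasDerivAt_const_mul a).hasDerivWithinAt) (mul_right_injective₀ ha).injOn]
  simp only [hdensity]

lemma measurePreserving_shear_mulHaarR :
    MeasurePreserving (fun p : ℝ × ℝ => (p.1, p.1 * p.2))
      (mulHaarR.prod mulHaarR) (mulHaarR.prod mulHaarR) :=
  (MeasurePreserving.id mulHaarR).skew_product (g := fun x y => x * y) (by fun_prop)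
    (ae_ne_zero_mulHaarR.mono fun _ ha => (measurePreserving_mul_left_mulHaarR ha).map_eq)

lemma measurable_sakIntegrandR1 (s₁ s₂ t u : ℂ) : Measurable (sakIntegrandR1 s₁ s₂ t u) := by
  unfold sakIntegrandR1 cpowR
  fun_prop

lemma sakIntegrandR1_shear (s₁ s₂ t u : ℂ) {x y : ℝ} (hx : x ≠ 0) (hy : y ≠ 0) :
    sakIntegrandR1 s₁ s₂ t u (x, x * y) =
      tateIntegrandR (s₂ + t + u) x * tateIntegrandR (s₁ + u) y := by
  have hexp : -π * x ^ 2 - π * ((x * y) ^ 2 / x ^ 2) = -π * x ^ 2 + -π * y ^ 2 := by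
    field_simp
    ring
  have hpow : cpowR x (s₂ + t + u) = cpowR x (s₂ - s₁ + t) * cpowR x (s₁ + u) := by
    rw [← cpowR_add]; congr 1; ring
  rw [sakIntegrandR1, tateIntegrandR, tateIntegrandR, hpow]
  dsimp only
  rw [cpowR_mul hx hy, hexp, Real.exp_add, Complex.ofReal_mul]
  ring

/-- For `Re(s₁ + u) > 0` and `Re(s₂ + t + u) > 0`, the double integral
`∫∫ |g₁|^{s₂-s₁+t} |g₂|^{s₁+u} e^{-π g₁² - π g₂²/g₁²} d×g₂ d×g₁` converges absolutely
and equals `ζ_ℝ(s₂+t+u) ζ_ℝ(s₁+u)`. -/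
theorem stmt_10 (t u s₁ s₂ : ℂ) (h₁ : 0 < (s₁ + u).re) (h₂ : 0 < (s₂ + t + u).re) :
    Integrable (sakIntegrandR1 s₁ s₂ t u) (mulHaarR.prod mulHaarR) ∧
      ∫ p : ℝ × ℝ, sakIntegrandR1 s₁ s₂ t u p ∂(mulHaarR.prod mulHaarR) =
        zetaR (s₂ + t + u) * zetaR (s₁ + u) := by
  have hshear := measurePreserving_shear_mulHaarR
  have hmeas : AEStronglyMeasurable (sakIntegrandR1 s₁ s₂ t u) (mulHaarR.prod mulHaarR) :=
    (measurable_sakIntegrandR1 s₁ s₂ t u).aestronglyMeasurable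
  have hsplit : sakIntegrandR1 s₁ s₂ t u ∘ (fun p : ℝ × ℝ => (p.1, p.1 * p.2))
      =ᵐ[mulHaarR.prod mulHaarR]
        fun p => tateIntegrandR (s₂ + t + u) p.1 * tateIntegrandR (s₁ + u) p.2 := by
    filter_upwards [Measure.quasiMeasurePreserving_fst.ae ae_ne_zero_mulHaarR,
      Measure.quasiMeasurePreserving_snd.ae ae_ne_zero_mulHaarR] with p hx hy
    exact sakIntegrandR1_shear s₁ s₂ t u hx hy
  refine ⟨(hshear.integrable_comp hmeas).mp ?_, ?_⟩
  · exact ((integrable_tateIntegrandR h₂).mul_prod (integrable_tateIntegrandR h₁)).congr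
      hsplit.symm
  · conv_lhs => rw [← hshear.map_eq]
    rw [integral_map hshear.measurable.aemeasurable (by rwa [hshear.map_eq]),
      ← Function.comp_def, integral_congr_ae hsplit, integral_prod_mul,
      integral_tateIntegrandR h₂, integral_tateIntegrandR h₁]
end

section
/- Let t₁, t₂, u, s₁, s₂ ∈ ℂ with Re(s₁ + u) > 0, Re(s₂ + t₁ + u + 1/2) > 0, and Re(s₂ + t₂ + u + 1/2) > 0. Then the triple integral ∫_{ℂˣ}∫_{ℂˣ}∫_{ℂˣ} |g₁|_ℂ^{s₂−s₁+t₁+1/2} · |g₂|_ℂ^{s₁+u} · |c|_ℂ^{t₂−t₁} · exp(−2π(|c|² + |g₁|²/|c|² + |g₂|²/|g₁|²)) d×c d×g₂ d×g₁ converges absolutely and equals ζ_ℂ(s₁ + u) · ζ_ℂ(s₂ + t₁ + u + 1/2) · ζ_ℂ(s₂ + t₂ + u + 1/2). (This is the case n = 2, F = ℂ of the paper's theorem on the modified GL_n × GL_{n−1} Rankin–Selberg integral of Sakellaridis, made fully explicit for π = |·|_ℂ^{t₁} ⊞ |·|_ℂ^{t₂} spherical on GL₂(ℂ) and σ = |·|_ℂ^u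 on GL₁(ℂ) via the paper's propagation formula; the integral evaluates to L(s₂ + 1/2, π × σ)·L(s₁, σ).) -/
open MeasureTheory

/-- The integrand of the `n = 2`, `F = ℂ` modified `GL_n × GL_{n-1}` Rankin–Selberg
integral of Sakellaridis, in the variables `p = (g₁, g₂, c)`:
`|g₁|_ℂ^{s₂-s₁+t₁+1/2} |g₂|_ℂ^{s₁+u} |c|_ℂ^{t₂-t₁}
  exp(-2π(|c|² + |g₁|²/|c|² + |g₂|²/|g₁|²))`. -/
noncomputable def sakIntegrandC2 (s₁ s₂ t₁ t₂ u : ℂ) (p : ℂ × ℂ × ℂ) : ℂ :=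
  cpowC p.1 (s₂ - s₁ + t₁ + 1 / 2) * cpowC p.2.1 (s₁ + u) * cpowC p.2.2 (t₂ - t₁) *
    (Real.exp (-(2 * Real.pi) * (‖p.2.2‖ ^ 2
      + ‖p.1‖ ^ 2 / ‖p.2.2‖ ^ 2
      + ‖p.2.1‖ ^ 2 / ‖p.1‖ ^ 2)) : ℂ)

/-!
Substituting `g₁ = c y`, `g₂ = c y x` is measure-preserving for the product of multiplicative
Haar measures, and separates the variables: the integrand becomes the product of three Tate
integrands `|z|_ℂ^w e^{-2π|z|²}` with `w = s₂ + t₂ + u + 1/2`, `s₂ + t₁ + u + 1/2`, `s₁ + u`.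
Each Tate integral is a Mellin transform: `|·|_ℂ` pushes `d×z` forward to `2 dt/t` on `(0, ∞)`,
so it equals `2 ∫₀^∞ t^w e^{-2πt} dt/t = 2 (2π)^{-w} Γ(w) = ζ_ℂ(w)`.
-/

open Set
open scoped ENNReal NNReal

theorem MeasurableEquiv.map_withDensity_comp {α β : Type*} [MeasurableSpace α] [MeasurableSpace β]
    (e : α ≃ᵐ β) (μ : Measure α) {g : β → ℝ≥0∞} (hg : Measurable g) :
    (μ.withDensity (g ∘ e)).map e = (μ.map e).withDensity g := by
  ext s hs
  rw [e.map_apply, withDensity_apply _ hs, withDensity_apply _ (e.measurable hs),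
    setLIntegral_map hs hg e.measurable]
  rfl

theorem measurePreserving_rotate {α β γ : Type*} [MeasurableSpace α] [MeasurableSpace β]
    [MeasurableSpace γ] (μa : Measure α) (μb : Measure β) (μc : Measure γ) [SFinite μa]
    [SFinite μb] [SFinite μc] :
    MeasurePreserving (fun p : α × β × γ => (p.2.1, p.2.2, p.1))
      (μa.prod (μb.prod μc)) (μb.prod (μc.prod μa)) :=
  (measurePreserving_prodAssoc μb μc μa).comp Measure.measurePreserving_swap

section Shear

variable {M : Type*} [Monoid M] [MeasurableSpace M] [MeasurableMul₂ M] {μ : Measure M} [SFinite μ]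

theorem measurePreserving_const_mul_prod_mul {c : M} (hc : MeasurePreserving (c * ·) μ μ)
    (hμ : ∀ᵐ a ∂μ, MeasurePreserving (a * ·) μ μ) :
    MeasurePreserving (fun p : M × M => (c * p.1, c * p.1 * p.2)) (μ.prod μ) (μ.prod μ) :=
  hc.skew_product (g := fun y x => c * y * x) (by fun_prop)
    (hc.quasiMeasurePreserving.ae hμ |>.mono fun _ h => h.map_eq)

theorem measurePreserving_prod_mul_prod_mul (hμ : ∀ᵐ a ∂μ, MeasurePreserving (a * ·) μ μ) :
    MeasurePreserving (fun p : M × M × M => (p.1, p.1 * p.2.1, p.1 * p.2.1 * p.2.2))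
      (μ.prod (μ.prod μ)) (μ.prod (μ.prod μ)) :=
  (MeasurePreserving.id μ).skew_product (g := fun c (q : M × M) => (c * q.1, c * q.1 * q.2))
    (by fun_prop) (hμ.mono fun _ hc => (measurePreserving_const_mul_prod_mul hc hμ).map_eq)

end Shear

section Radial

variable {E : Type*} [NormedAddCommGroup E] [NormedSpace ℝ E]

theorem Complex.integrable_comp_sq_norm_iff {g : ℝ → E} :
    Integrable (fun z : ℂ => g (‖z‖ ^ 2)) ↔ IntegrableOn g (Ioi 0) := by
  rw [integrable_fun_norm_addHaar volume (f := fun r => g (r ^ 2)), Complex.finrank_real_complex,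
    ← integrableOn_Ioi_comp_rpow_iff' g two_ne_zero]
  norm_num

theorem Complex.integral_comp_sq_norm [CompleteSpace E] (g : ℝ → E) :
    ∫ z : ℂ, g (‖z‖ ^ 2) = Real.pi • ∫ t in Ioi 0, g t := by
  rw [integral_fun_norm_addHaar volume (fun r => g (r ^ 2)), Complex.finrank_real_complex,
    ← integral_comp_rpow_Ioi_of_pos (g := g) two_pos]
  simp only [mul_smul, integral_smul, Real.rpow_two]
  norm_num [Measure.real]
  module

end Radial

theorem Complex.map_mul_left_volume {w : ℂ} (hw : w ≠ 0) :
    (volume : Measure ℂ).map (w * ·) = ENNReal.ofReal (‖w‖ ^ 2)⁻¹ • volume := by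
  have hdet : LinearMap.det (Algebra.lmul ℝ ℂ w) = ‖w‖ ^ 2 := by
    rw [← Algebra.norm_apply, Algebra.norm_complex_apply, Complex.normSq_eq_norm_sq]
  have h := Measure.map_linearMap_addHaar_eq_smul_addHaar (volume : Measure ℂ)
    (f := Algebra.lmul ℝ ℂ w) (by rw [hdet]; positivity)
  rwa [hdet, abs_of_nonneg (by positivity)] at h

theorem hasMellin_exp_neg_mul {a : ℝ} (ha : 0 < a) {s : ℂ} (hs : 0 < s.re) :
    HasMellin (fun t => (Real.exp (-(a * t)) : ℂ)) s ((a : ℂ) ^ (-s) * Complex.Gamma s) := by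
  have hexp : HasMellin (fun t => (Real.exp (-t) : ℂ)) s (Complex.Gamma s) := by
    refine ⟨?_, by rw [Complex.Gamma_eq_integral hs, Complex.GammaIntegral_eq_mellin]⟩
    refine (Complex.GammaIntegral_convergent hs).congr_fun (fun t _ => ?_) measurableSet_Ioi
    simp [mul_comm]
  exact ⟨(MellinConvergent.comp_mul_left ha).2 hexp.1,
    (mellin_comp_mul_left (fun t => (Real.exp (-t) : ℂ)) s ha).trans
      (by rw [hexp.2, smul_eq_mul])⟩

lemma Complex.inv_smul_exp_mul_log_mul {t : ℝ} (ht : 0 < t) (w x : ℂ) :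
    t⁻¹ • (Complex.exp (w * Real.log t) * x) = (t : ℂ) ^ (w - 1) • x := by
  have ht' : (t : ℂ) ≠ 0 := Complex.ofReal_ne_zero.2 ht.ne'
  rw [Complex.cpow_sub _ _ ht', Complex.cpow_one, Complex.cpow_def_of_ne_zero ht',
    ← Complex.ofReal_log ht.le, Complex.real_smul, smul_eq_mul]
  push_cast
  field_simp

section MulHaarC

instance : SigmaFinite mulHaarC :=
  SigmaFinite.withDensity_of_ne_top' fun _ => ENNReal.ofReal_ne_top

lemma mulHaarC_singleton_zero : mulHaarC {0} = 0 :=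
  withDensity_absolutelyContinuous _ _ (measure_singleton 0)

lemma ae_ne_zero_mulHaarC : ∀ᵐ z ∂mulHaarC, z ≠ 0 :=
  measure_eq_zero_iff_ae_notMem.1 mulHaarC_singleton_zero

lemma measurePreserving_mul_left_mulHaarC {w : ℂ} (hw : w ≠ 0) :
    MeasurePreserving (w * ·) mulHaarC mulHaarC := by
  refine ⟨measurable_const_mul w, ?_⟩
  let e : ℂ ≃ᵐ ℂ := (Homeomorph.mulLeft₀ w hw).toMeasurableEquiv
  let ρ : ℂ → ℝ≥0∞ := fun z => ENNReal.ofReal (2 / (Real.pi * ‖z‖ ^ 2))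
  have hρ : Measurable ρ := by fun_prop
  have hρe : ρ = (ENNReal.ofReal (‖w‖ ^ 2) • ρ) ∘ e := by
    ext z
    simp only [ρ, Function.comp_apply, Pi.smul_apply, smul_eq_mul,
      ← ENNReal.ofReal_mul (sq_nonneg _)]
    rw [show e z = w * z from rfl, norm_mul]
    rcases eq_or_ne z 0 with rfl | hz
    · simp
    · field_simp
  calc (volume.withDensity ρ).map e
      = (volume.map e).withDensity (ENNReal.ofReal (‖w‖ ^ 2) • ρ) := by
        conv_lhs => rw [hρe]
        exact e.map_withDensity_comp _ (hρ.const_smul _)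
    _ = volume.withDensity ρ := by
        have hw2 : 0 < ‖w‖ ^ 2 := by positivity
        rw [show ⇑e = (w * ·) from rfl, Complex.map_mul_left_volume hw, withDensity_smul_measure,
          withDensity_smul _ hρ, smul_smul, ← ENNReal.ofReal_mul (inv_nonneg.2 hw2.le),
          inv_mul_cancel₀ hw2.ne', ENNReal.ofReal_one, one_smul]

lemma measurePreserving_mulHaarC_prod_shear :
    MeasurePreserving (fun p : ℂ × ℂ × ℂ => (p.1 * p.2.1, p.1 * p.2.1 * p.2.2, p.1))
      (mulHaarC.prod (mulHaarC.prod mulHaarC)) (mulHaarC.prod (mulHaarC.prod mulHaarC)) :=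
  (measurePreserving_rotate _ _ _).comp <| measurePreserving_prod_mul_prod_mul <|
    ae_ne_zero_mulHaarC.mono fun _ => measurePreserving_mul_left_mulHaarC

lemma ae_ne_zero_mulHaarC_prod :
    ∀ᵐ p ∂(mulHaarC.prod (mulHaarC.prod mulHaarC)), p.1 ≠ 0 ∧ p.2.1 ≠ 0 ∧ p.2.2 ≠ 0 := by
  have h := ae_ne_zero_mulHaarC
  filter_upwards [Measure.quasiMeasurePreserving_fst.ae h,
    Measure.quasiMeasurePreserving_snd.ae (Measure.quasiMeasurePreserving_fst.ae h),
    Measure.quasiMeasurePreserving_snd.ae (Measure.quasiMeasurePreserving_snd.ae h)]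
    with p hc hy hx using ⟨hc, hy, hx⟩

variable {E : Type*} [NormedAddCommGroup E] [NormedSpace ℝ E]

lemma mulHaarC_eq_withDensity_toNNReal :
    mulHaarC = volume.withDensity fun z => ((2 / (Real.pi * ‖z‖ ^ 2)).toNNReal : ℝ≥0∞) :=
  rfl

lemma measurable_mulHaarC_density :
    Measurable fun z : ℂ => (2 / (Real.pi * ‖z‖ ^ 2)).toNNReal := by
  fun_prop

lemma coe_mulHaarC_density (z : ℂ) :
    ((2 / (Real.pi * ‖z‖ ^ 2)).toNNReal : ℝ) = 2 / (Real.pi * ‖z‖ ^ 2) :=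
  Real.coe_toNNReal _ (by positivity)

lemma integrable_mulHaarC_iff {f : ℂ → E} :
    Integrable f mulHaarC ↔ Integrable fun z => (2 / (Real.pi * ‖z‖ ^ 2)) • f z := by
  rw [mulHaarC_eq_withDensity_toNNReal,
    integrable_withDensity_iff_integrable_smul measurable_mulHaarC_density]
  simp_rw [NNReal.smul_def, coe_mulHaarC_density]

lemma integral_mulHaarC_eq [CompleteSpace E] (f : ℂ → E) :
    ∫ z, f z ∂mulHaarC = ∫ z, (2 / (Real.pi * ‖z‖ ^ 2)) • f z := by
  rw [mulHaarC_eq_withDensity_toNNReal,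
    integral_withDensity_eq_integral_smul measurable_mulHaarC_density]
  simp_rw [NNReal.smul_def, coe_mulHaarC_density]

lemma integrable_mulHaarC_comp_sq_norm_iff {g : ℝ → E} :
    Integrable (fun z => g (‖z‖ ^ 2)) mulHaarC ↔ IntegrableOn (fun t => t⁻¹ • g t) (Ioi 0) := by
  rw [integrable_mulHaarC_iff,
    Complex.integrable_comp_sq_norm_iff (g := fun t => (2 / (Real.pi * t)) • g t)]
  simp_rw [div_mul_eq_div_div, div_eq_mul_inv (2 / Real.pi), mul_smul]
  exact integrable_smul_iff (by positivity) _

lemma integral_mulHaarC_comp_sq_norm [CompleteSpace E] (g : ℝ → E) :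
    ∫ z, g (‖z‖ ^ 2) ∂mulHaarC = (2 : ℝ) • ∫ t in Ioi 0, t⁻¹ • g t := by
  rw [integral_mulHaarC_eq, Complex.integral_comp_sq_norm (fun t => (2 / (Real.pi * t)) • g t)]
  simp_rw [div_mul_eq_div_div, div_eq_mul_inv (2 / Real.pi), mul_smul, integral_smul, smul_smul]
  field_simp

end MulHaarC

noncomputable def tateIntegrandC (w z : ℂ) : ℂ :=
  cpowC z w * (Real.exp (-(2 * Real.pi) * ‖z‖ ^ 2) : ℂ)

section TateIntegral

variable {w : ℂ} (hw : 0 < w.re)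
include hw

lemma integrable_tateIntegrandC : Integrable (tateIntegrandC w) mulHaarC :=
  integrable_mulHaarC_comp_sq_norm_iff
    (g := fun t => Complex.exp (w * Real.log t) * (Real.exp (-(2 * Real.pi) * t) : ℂ)) |>.2 <|
    (hasMellin_exp_neg_mul Real.two_pi_pos hw).1.congr_fun
      (fun t ht => by simp only [Complex.inv_smul_exp_mul_log_mul ht, neg_mul]) measurableSet_Ioi

lemma integral_tateIntegrandC : ∫ z, tateIntegrandC w z ∂mulHaarC = zetaC w := calc
  _ = (2 : ℝ) • ∫ t in Ioi 0, t⁻¹ •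
        (Complex.exp (w * Real.log t) * (Real.exp (-(2 * Real.pi) * t) : ℂ)) :=
    integral_mulHaarC_comp_sq_norm _
  _ = (2 : ℝ) • mellin (fun t => (Real.exp (-(2 * Real.pi * t)) : ℂ)) w := by
    rw [mellin]
    congr 1
    exact setIntegral_congr_fun measurableSet_Ioi
      (fun t ht => by simp only [Complex.inv_smul_exp_mul_log_mul ht, neg_mul])
  _ = zetaC w := by
    rw [(hasMellin_exp_neg_mul Real.two_pi_pos hw).2, zetaC, Complex.real_smul]
    push_cast
    ring

end TateIntegral

lemma cpowC_mul {a b : ℂ} (ha : a ≠ 0) (hb : b ≠ 0) (w : ℂ) :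
    cpowC (a * b) w = cpowC a w * cpowC b w := by
  rw [cpowC, cpowC, cpowC, ← Complex.exp_add, norm_mul, mul_pow,
    Real.log_mul (by positivity) (by positivity), Complex.ofReal_add, mul_add]

lemma cpowC_add (z v w : ℂ) : cpowC z (v + w) = cpowC z v * cpowC z w := by
  rw [cpowC, cpowC, cpowC, ← Complex.exp_add, add_mul]

lemma measurable_sakIntegrandC2 (s₁ s₂ t₁ t₂ u : ℂ) :
    Measurable (sakIntegrandC2 s₁ s₂ t₁ t₂ u) := by
  unfold sakIntegrandC2 cpowC
  fun_prop

lemma sakIntegrandC2_mul_mul (s₁ s₂ t₁ t₂ u : ℂ) {c y x : ℂ} (hc : c ≠ 0) (hy : y ≠ 0)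
    (hx : x ≠ 0) :
    sakIntegrandC2 s₁ s₂ t₁ t₂ u (c * y, c * y * x, c) =
      tateIntegrandC (s₂ + t₂ + u + 1 / 2) c *
        (tateIntegrandC (s₂ + t₁ + u + 1 / 2) y * tateIntegrandC (s₁ + u) x) := by
  have hwc : s₂ + t₂ + u + 1 / 2 = (s₂ - s₁ + t₁ + 1 / 2) + (s₁ + u) + (t₂ - t₁) := by ring
  have hwy : s₂ + t₁ + u + 1 / 2 = (s₂ - s₁ + t₁ + 1 / 2) + (s₁ + u) := by ring
  have hgauss : ‖c‖ ^ 2 + ‖c * y‖ ^ 2 / ‖c‖ ^ 2 + ‖c * y * x‖ ^ 2 / ‖c * y‖ ^ 2 =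
      ‖c‖ ^ 2 + ‖y‖ ^ 2 + ‖x‖ ^ 2 := by
    simp only [norm_mul, mul_pow]
    field_simp
  simp only [sakIntegrandC2, tateIntegrandC, hgauss, hwc, hwy, cpowC_add,
    cpowC_mul (mul_ne_zero hc hy) hx, cpowC_mul hc hy, mul_add, Real.exp_add, Complex.ofReal_mul]
  ring

/-- For `Re(s₁ + u) > 0`, `Re(s₂ + t₁ + u + 1/2) > 0`, `Re(s₂ + t₂ + u + 1/2) > 0`, the
triple integral `∫∫∫ |g₁|_ℂ^{s₂-s₁+t₁+1/2} |g₂|_ℂ^{s₁+u} |c|_ℂ^{t₂-t₁}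
  e^{-2π(|c|² + |g₁|²/|c|² + |g₂|²/|g₁|²)} d×c d×g₂ d×g₁` converges absolutely and
equals `ζ_ℂ(s₁+u) ζ_ℂ(s₂+t₁+u+1/2) ζ_ℂ(s₂+t₂+u+1/2)`. -/
theorem stmt_13 (t₁ t₂ u s₁ s₂ : ℂ) (h₁ : 0 < (s₁ + u).re)
    (h₂ : 0 < (s₂ + t₁ + u + 1 / 2).re) (h₃ : 0 < (s₂ + t₂ + u + 1 / 2).re) :
    Integrable (sakIntegrandC2 s₁ s₂ t₁ t₂ u) (mulHaarC.prod (mulHaarC.prod mulHaarC)) ∧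
      ∫ p : ℂ × ℂ × ℂ, sakIntegrandC2 s₁ s₂ t₁ t₂ u p
          ∂(mulHaarC.prod (mulHaarC.prod mulHaarC)) =
        zetaC (s₁ + u) * zetaC (s₂ + t₁ + u + 1 / 2) * zetaC (s₂ + t₂ + u + 1 / 2) := by
  set μ := mulHaarC.prod (mulHaarC.prod mulHaarC)
  set F := sakIntegrandC2 s₁ s₂ t₁ t₂ u
  have hT : MeasurePreserving _ μ μ := measurePreserving_mulHaarC_prod_shear
  have hF : AEStronglyMeasurable F μ :=
    (measurable_sakIntegrandC2 s₁ s₂ t₁ t₂ u).aestronglyMeasurable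
  have hfactor : (fun p => F (p.1 * p.2.1, p.1 * p.2.1 * p.2.2, p.1)) =ᵐ[μ]
      fun p => tateIntegrandC (s₂ + t₂ + u + 1 / 2) p.1 *
        (tateIntegrandC (s₂ + t₁ + u + 1 / 2) p.2.1 * tateIntegrandC (s₁ + u) p.2.2) :=
    ae_ne_zero_mulHaarC_prod.mono fun _ ⟨hc, hy, hx⟩ =>
      sakIntegrandC2_mul_mul s₁ s₂ t₁ t₂ u hc hy hx
  refine ⟨(hT.integrable_comp hF).1 <| Integrable.congr ((integrable_tateIntegrandC h₃).mul_prod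
    ((integrable_tateIntegrandC h₂).mul_prod (integrable_tateIntegrandC h₁))) hfactor.symm, ?_⟩
  conv_lhs => rw [← hT.map_eq]
  rw [integral_map hT.measurable.aemeasurable (by rwa [hT.map_eq]), integral_congr_ae hfactor,
    integral_prod_mul (tateIntegrandC _) fun q : ℂ × ℂ =>
      tateIntegrandC (s₂ + t₁ + u + 1 / 2) q.1 * tateIntegrandC (s₁ + u) q.2,
    integral_prod_mul, integral_tateIntegrandC h₁, integral_tateIntegrandC h₂,
    integral_tateIntegrandC h₃]
  ring
end
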